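/- arXiv:1710.03647 — 7 statements merged into one kernel-verified Lean document; each statement's English description precedes it below -/
import Mathlib

section
/- Let Γ = (V,E,w,⟨V₀,V₁⟩) be an energy game arena and let σ₀ be a memoryless strategy for player 0. For every vertex v ∈ V, σ₀ is winning from v (i.e., winning from v with some initial credit c ∈ ℕ) if and only if every cycle reachable from v in the weighted graph G(σ₀) is nonnegative. -/
open scoped Classical
noncomputable section

/-- An energy game arena: vertices `V`, edge relation `E`, integer weights `w`,
player-0 vertices `P0` (player 1 owns the rest), every vertex has a successor. -/
structure Arena (V : Type) where
  E : V → V → Prop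
  w : V → V → ℤ
  P0 : V → Prop
  total : ∀ v, ∃ v', E v v'

variable {V : Type}

/-- `ρ` is a play (infinite path) starting at `v`. -/
def IsPlay (A : Arena V) (v : V) (ρ : ℕ → V) : Prop :=
  ρ 0 = v ∧ ∀ i, A.E (ρ i) (ρ (i + 1))

/-- A memoryless strategy for player 0. -/
def Strategy0 (A : Arena V) (σ : V → V) : Prop :=
  ∀ v, A.P0 v → A.E v (σ v)

/-- A memoryless strategy for player 1. -/
def Strategy1 (A : Arena V) (σ : V → V) : Prop :=
  ∀ v, ¬ A.P0 v → A.E v (σ v)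

/-- The play `ρ` is consistent with the player-0 strategy `σ`. -/
def Consistent0 (A : Arena V) (σ : V → V) (ρ : ℕ → V) : Prop :=
  ∀ j, A.P0 (ρ j) → ρ (j + 1) = σ (ρ j)

/-- The play `ρ` is consistent with the player-1 strategy `σ`. -/
def Consistent1 (A : Arena V) (σ : V → V) (ρ : ℕ → V) : Prop :=
  ∀ j, ¬ A.P0 (ρ j) → ρ (j + 1) = σ (ρ j)

/-- Energy level of the prefix `ρ 0 … ρ j` with initial credit `c`. -/
def energy (A : Arena V) (c : ℕ) (ρ : ℕ → V) (j : ℕ) : ℤ :=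
  (c : ℤ) + ∑ i ∈ Finset.range j, A.w (ρ i) (ρ (i + 1))

/-- The player-0 strategy `σ` is winning from `v` with initial credit `c`. -/
def WinningFrom (A : Arena V) (σ : V → V) (v : V) (c : ℕ) : Prop :=
  ∀ ρ : ℕ → V, IsPlay A v ρ → Consistent0 A σ ρ → ∀ j, 0 ≤ energy A c ρ j

/-- Winning region of player 0. -/
def W0 (A : Arena V) : Set V :=
  {v | ∃ σ : V → V, Strategy0 A σ ∧ ∃ c : ℕ, WinningFrom A σ v c}

/-- `a ⊖ b = max (0, a - b)`, with `⊤ ⊖ b = ⊤`. -/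
def osub (a : ℕ∞) (b : ℤ) : ℕ∞ :=
  a.map (fun n : ℕ => ((n : ℤ) - b).toNat)

/-- Energy progress measure. -/
def IsEPM (A : Arena V) (f : V → ℕ∞) : Prop :=
  (∀ v, A.P0 v → ∃ v', A.E v v' ∧ osub (f v') (A.w v v') ≤ f v) ∧
  (∀ v, ¬ A.P0 v → ∀ v', A.E v v' → osub (f v') (A.w v v') ≤ f v)

/-- New value at `v` computed by the lifting operator. -/
def liftVal (A : Arena V) (f : V → ℕ∞) (v : V) : ℕ∞ :=
  if A.P0 v then sInf {x : ℕ∞ | ∃ v', A.E v v' ∧ x = osub (f v') (A.w v v')}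
  else sSup {x : ℕ∞ | ∃ v', A.E v v' ∧ x = osub (f v') (A.w v v')}

/-- The lifting operator `δ(·, v)`. -/
def liftOp (A : Arena V) (f : V → ℕ∞) (v : V) : V → ℕ∞ :=
  fun u => if u = v then liftVal A f v else f u

/-- `f` violates the EPM local condition at `v`. -/
def Violates (A : Arena V) (f : V → ℕ∞) (v : V) : Prop :=
  (A.P0 v ∧ ∀ v', A.E v v' → f v < osub (f v') (A.w v v')) ∨
  (¬ A.P0 v ∧ ∃ v', A.E v v' ∧ f v < osub (f v') (A.w v v'))

/-- `M_Γ = Σ_{v∈V} max({0} ∪ {−w(v,v') : (v,v') ∈ E})`. -/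
def MGamma (A : Arena V) [Fintype V] : ℕ :=
  ∑ v : V, (Finset.univ.filter (fun v' => A.E v v')).sup (fun v' => (-(A.w v v')).toNat)

/-- Edge relation of the graph `G(σ)` obtained by restricting player-0 moves to `σ`. -/
def StratEdge (A : Arena V) (σ : V → V) (a b : V) : Prop :=
  A.E a b ∧ (A.P0 a → b = σ a)

/-- `p 0, …, p n` is a finite path for the edge relation `R`. -/
def FinPath (R : V → V → Prop) (p : ℕ → V) (n : ℕ) : Prop :=
  ∀ i < n, R (p i) (p (i + 1))

/-!
If a play consistent with `σ` reaches a negative cycle, pumping that cycle drives the energy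
below any initial credit. Conversely, if every reachable cycle of `G(σ)` is nonnegative, cutting
cycles out of a path from `v` never increases its weight, so every such path weighs at least as
much as a simple one, which has fewer than `|V|` edges; hence the credit `|V| · W` suffices, where
`-W` bounds all edge weights from below.
-/

def pathWeight (w : V → V → ℤ) (p : ℕ → V) (n : ℕ) : ℤ :=
  ∑ i ∈ Finset.range n, w (p i) (p (i + 1))

def pathAppend (p : ℕ → V) (a : ℕ) (q : ℕ → V) : ℕ → V :=
  fun t => if t < a then p t else q (t - a)

def cycleRepeat (p : ℕ → V) (m : ℕ) : ℕ → V :=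
  fun t => p (t % m)

def CyclesNonnegFrom (R : V → V → Prop) (w : V → V → ℤ) (v : V) : Prop :=
  ∀ (m : ℕ) (p : ℕ → V), 1 ≤ m → p 0 = p m → FinPath R p m →
    (∃ (k : ℕ) (q : ℕ → V), q 0 = v ∧ q k = p 0 ∧ FinPath R q k) →
    0 ≤ pathWeight w p m

section Paths

variable {R : V → V → Prop} {w : V → V → ℤ} {p q : ℕ → V}

theorem pathWeight_add (a b : ℕ) :
    pathWeight w p (a + b) = pathWeight w p a + pathWeight w (fun t => p (a + t)) b := by
  simp only [pathWeight, Finset.sum_range_add, add_assoc]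

theorem pathWeight_congr {n : ℕ} (h : ∀ t ≤ n, p t = q t) :
    pathWeight w p n = pathWeight w q n :=
  Finset.sum_congr rfl fun i hi => by
    have := Finset.mem_range.mp hi
    rw [h i (by omega), h (i + 1) (by omega)]

theorem neg_mul_le_pathWeight {W : ℕ} (hW : ∀ a b, -(W : ℤ) ≤ w a b) (n : ℕ) :
    -(n * W : ℤ) ≤ pathWeight w p n := by
  calc -(n * W : ℤ) = ∑ _i ∈ Finset.range n, -(W : ℤ) := by simp
    _ ≤ pathWeight w p n := Finset.sum_le_sum fun _ _ => hW _ _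

theorem finPath_add_iff {a b : ℕ} :
    FinPath R p (a + b) ↔ FinPath R p a ∧ FinPath R (fun t => p (a + t)) b := by
  constructor
  · intro h
    exact ⟨fun i hi => h i (by omega),
      fun i hi => by simpa [add_assoc] using h (a + i) (by omega)⟩
  · rintro ⟨h₁, h₂⟩ i hi
    by_cases hia : i < a
    · exact h₁ i hia
    · obtain ⟨t, rfl⟩ := Nat.exists_eq_add_of_le (not_lt.mp hia)
      simpa [add_assoc] using h₂ t (by omega)

theorem FinPath.congr {n : ℕ} (hp : FinPath R p n) (h : ∀ t ≤ n, p t = q t) :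
    FinPath R q n := fun i hi => by
  rw [← h i (by omega), ← h (i + 1) (by omega)]
  exact hp i hi

theorem pathAppend_of_le {a t : ℕ} (hpq : p a = q 0) (ht : t ≤ a) :
    pathAppend p a q t = p t := by
  rcases ht.lt_or_eq with ht | rfl
  · simp [pathAppend, ht]
  · simp [pathAppend, hpq]

theorem pathAppend_add (a t : ℕ) : pathAppend p a q (a + t) = q t := by
  simp [pathAppend]

theorem FinPath.append {a b : ℕ} (hp : FinPath R p a) (hq : FinPath R q b) (hpq : p a = q 0) :
    FinPath R (pathAppend p a q) (a + b) :=
  finPath_add_iff.mpr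
    ⟨hp.congr fun _ ht => (pathAppend_of_le hpq ht).symm,
      hq.congr fun t _ => (pathAppend_add a t).symm⟩

theorem pathWeight_pathAppend {a : ℕ} (b : ℕ) (hpq : p a = q 0) :
    pathWeight w (pathAppend p a q) (a + b) = pathWeight w p a + pathWeight w q b := by
  rw [pathWeight_add, pathWeight_congr fun t ht => pathAppend_of_le hpq ht]
  simp only [pathAppend_add]

theorem FinPath.cycleRepeat {m : ℕ} (hp : FinPath R p m) (hm : 1 ≤ m) (hcl : p 0 = p m)
    (n : ℕ) : FinPath R (cycleRepeat p m) n := fun i _ => by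
  have hi := Nat.mod_lt i hm
  have hstep := hp _ hi
  simp only [_root_.cycleRepeat, ← Nat.mod_add_mod i m 1]
  by_cases hlast : i % m + 1 < m
  · rwa [Nat.mod_eq_of_lt hlast]
  · have hwrap : i % m + 1 = m := by omega
    rw [hwrap, Nat.mod_self, hcl]
    rwa [hwrap] at hstep

theorem pathWeight_cycleRepeat_mul {m : ℕ} (hcl : p 0 = p m) (N : ℕ) :
    pathWeight w (cycleRepeat p m) (N * m) = N * pathWeight w p m := by
  induction N with
  | zero => simp [pathWeight]
  | succ N ih =>
    have hperiod : ∀ t ≤ m, cycleRepeat p m (N * m + t) = p t := fun t ht => by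
      rcases ht.lt_or_eq with ht | rfl <;> simp only [cycleRepeat]
      · rw [Nat.mul_add_mod', Nat.mod_eq_of_lt ht]
      · rw [Nat.mul_add_mod', Nat.mod_self, hcl]
    rw [Nat.succ_mul, pathWeight_add, ih, pathWeight_congr hperiod]
    push_cast
    ring

end Paths

theorem Int.nonneg_of_forall_add_nat_mul_nonneg {a s : ℤ} (h : ∀ N : ℕ, 0 ≤ a + N * s) :
    0 ≤ s := by
  by_contra! hs
  have := h (a.toNat + 1)
  push_cast at this
  nlinarith [Int.self_le_toNat a]

theorem exists_neg_le_of_finite [Finite V] (w : V → V → ℤ) :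
    ∃ W : ℕ, ∀ a b, -(W : ℤ) ≤ w a b := by
  obtain ⟨B, hB⟩ := (Set.finite_range (Function.uncurry w)).bddBelow
  refine ⟨(-B).toNat, fun a b => ?_⟩
  have := hB (Set.mem_range_self (a, b))
  simp only [Function.uncurry_apply_pair] at this
  omega

section Cycles

variable {R : V → V → Prop} {w : V → V → ℤ} {v : V}

theorem lt_card_of_forall_ne [Finite V] {p : ℕ → V} {n : ℕ}
    (hne : ∀ i j, i < j → j ≤ n → p i ≠ p j) : n < Nat.card V := by
  have hinj : Function.Injective fun t : Fin (n + 1) => p t := fun a b hab => by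
    by_contra hab'
    rcases Fin.lt_or_lt_of_ne hab' with h | h
    · exact hne a b h (by omega) hab
    · exact hne b a h (by omega) hab.symm
  simpa using Nat.card_le_card_of_injective _ hinj

theorem exists_cut_cycle (hcyc : CyclesNonnegFrom R w v) {p : ℕ → V} {i d r : ℕ}
    (hd : 1 ≤ d) (hp0 : p 0 = v) (hp : FinPath R p (i + d + r)) (hpi : p i = p (i + d)) :
    ∃ q : ℕ → V, q 0 = v ∧ FinPath R q (i + r) ∧
      pathWeight w q (i + r) ≤ pathWeight w p (i + d + r) := by
  obtain ⟨hpid, hsuffix⟩ := finPath_add_iff.mp hp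
  obtain ⟨hprefix, hcycle⟩ := finPath_add_iff.mp hpid
  have hglue : p i = p (i + d + 0) := hpi
  have hnonneg : 0 ≤ pathWeight w (fun t => p (i + t)) d :=
    hcyc d _ hd hpi hcycle ⟨i, p, hp0, rfl, hprefix⟩
  refine ⟨pathAppend p i fun t => p (i + d + t), ?_, hprefix.append hsuffix hglue, ?_⟩
  · rw [pathAppend_of_le hglue (Nat.zero_le i), hp0]
  · rw [pathWeight_pathAppend r hglue, pathWeight_add, pathWeight_add i d]
    linarith

theorem neg_card_mul_le_pathWeight [Finite V] {W : ℕ} (hW : ∀ a b, -(W : ℤ) ≤ w a b)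
    (hcyc : CyclesNonnegFrom R w v) (n : ℕ) {p : ℕ → V} (hp0 : p 0 = v) (hp : FinPath R p n) :
    -(Nat.card V * W : ℤ) ≤ pathWeight w p n := by
  induction n using Nat.strong_induction_on generalizing p with
  | _ n ih =>
  by_cases hrep : ∃ i j, i < j ∧ j ≤ n ∧ p i = p j
  · obtain ⟨i, j, hij, hjn, hpij⟩ := hrep
    obtain ⟨d, rfl⟩ := Nat.exists_eq_add_of_le hij.le
    obtain ⟨r, rfl⟩ := Nat.exists_eq_add_of_le hjn
    obtain ⟨q, hq0, hq, hle⟩ := exists_cut_cycle hcyc (by omega) hp0 hp hpij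
    exact (ih (i + r) (by omega) hq0 hq).trans hle
  · push Not at hrep
    have hn := lt_card_of_forall_ne hrep
    calc -(Nat.card V * W : ℤ) ≤ -(n * W) := by gcongr
      _ ≤ pathWeight w p n := neg_mul_le_pathWeight hW n

end Cycles

theorem isPlay_and_consistent0_iff {A : Arena V} {σ : V → V} {v : V} {ρ : ℕ → V} :
    IsPlay A v ρ ∧ Consistent0 A σ ρ ↔
      ρ 0 = v ∧ ∀ i, StratEdge A σ (ρ i) (ρ (i + 1)) := by
  simp only [IsPlay, Consistent0, StratEdge]
  exact ⟨fun ⟨⟨h0, hE⟩, hc⟩ => ⟨h0, fun i => ⟨hE i, hc i⟩⟩,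
    fun ⟨h0, h⟩ => ⟨⟨h0, fun i => (h i).1⟩, fun i => (h i).2⟩⟩

theorem cyclesNonnegFrom_of_winningFrom {A : Arena V} {σ : V → V} {v : V} {c : ℕ}
    (hwin : WinningFrom A σ v c) : CyclesNonnegFrom (StratEdge A σ) A.w v := by
  rintro m p hm hcl hp ⟨k, q, hq0, hqk, hq⟩
  -- the lasso: `q` up to the cycle, then the cycle forever
  set ρ := pathAppend q k (cycleRepeat p m) with hρdef
  have hglue : q k = cycleRepeat p m 0 := by simp [cycleRepeat, hqk]
  have hρ0 : ρ 0 = v := by rw [hρdef, pathAppend_of_le hglue (Nat.zero_le k), hq0]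
  have hρ : ∀ i, StratEdge A σ (ρ i) (ρ (i + 1)) := fun i =>
    hq.append (hp.cycleRepeat hm hcl (i + 1)) hglue i (by omega)
  obtain ⟨hplay, hcons⟩ := isPlay_and_consistent0_iff.mpr ⟨hρ0, hρ⟩
  have henergy (N : ℕ) : 0 ≤ (c + pathWeight A.w q k) + N * pathWeight A.w p m := by
    have := hwin ρ hplay hcons (k + N * m)
    rwa [energy, ← pathWeight, hρdef, pathWeight_pathAppend _ hglue,
      pathWeight_cycleRepeat_mul hcl, ← add_assoc] at this
  exact Int.nonneg_of_forall_add_nat_mul_nonneg henergy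

theorem winningFrom_of_cyclesNonnegFrom [Finite V] {A : Arena V} {σ : V → V} {v : V}
    (hcyc : CyclesNonnegFrom (StratEdge A σ) A.w v) : ∃ c, WinningFrom A σ v c := by
  obtain ⟨W, hW⟩ := exists_neg_le_of_finite A.w
  refine ⟨Nat.card V * W, fun ρ hplay hcons j => ?_⟩
  obtain ⟨hρ0, hρ⟩ := isPlay_and_consistent0_iff.mp ⟨hplay, hcons⟩
  have := neg_card_mul_le_pathWeight hW hcyc j hρ0 fun i _ => hρ i
  rw [energy, ← pathWeight]
  push_cast
  linarith

theorem stmt0_general {V : Type} [Fintype V] (A : Arena V)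
    (σ : V → V) (v : V) :
    (∃ c : ℕ, WinningFrom A σ v c) ↔
      ∀ (m : ℕ) (p : ℕ → V), 1 ≤ m → p 0 = p m →
        FinPath (StratEdge A σ) p m →
        (∃ (k : ℕ) (q : ℕ → V), q 0 = v ∧ q k = p 0 ∧ FinPath (StratEdge A σ) q k) →
        0 ≤ ∑ i ∈ Finset.range m, A.w (p i) (p (i + 1)) :=
  ⟨fun ⟨_, hwin⟩ => cyclesNonnegFrom_of_winningFrom hwin, winningFrom_of_cyclesNonnegFrom⟩

/-- A memoryless player-0 strategy `σ` is winning from `v` (with some initial credit)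
iff every cycle reachable from `v` in `G(σ)` is nonnegative. -/
theorem stmt0 {V : Type} [Fintype V] [Nonempty V] (A : Arena V)
    (σ : V → V) (hσ : Strategy0 A σ) (v : V) :
    (∃ c : ℕ, WinningFrom A σ v c) ↔
      ∀ (m : ℕ) (p : ℕ → V), 1 ≤ m → p 0 = p m →
        FinPath (StratEdge A σ) p m →
        (∃ (k : ℕ) (q : ℕ → V), q 0 = v ∧ q k = p 0 ∧ FinPath (StratEdge A σ) q k) →
        0 ≤ ∑ i ∈ Finset.range m, A.w (p i) (p (i + 1)) :=
  stmt0_general A σ v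
end
end

section
/- Energy games are memoryless determined: for every vertex v ∈ V of an energy game arena Γ = (V,E,w,⟨V₀,V₁⟩), either player 0 has a memoryless strategy σ₀ and an initial credit c ∈ ℕ such that σ₀ is winning from v with credit c, or player 1 has a memoryless strategy σ₁ such that for every initial credit c ∈ ℕ and every play from v consistent with σ₁, some prefix of the play has negative energy level. -/
open scoped Classical
noncomputable section

variable {V : Type}

/-!
Let `minCredit n u` be the least initial credit with which player 0 survives `n` steps from `u`,
computed by value iteration. If it stays bounded in `n`, then once the iteration has stabilised,
choosing a successor that realises the one-step minimum is a memoryless winning strategy for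
player 0, the limit value being a sufficient credit.

If it is unbounded, player 1 wins, and his strategy is made memoryless by induction on the number
of player-1 edges. Split the edges of a player-1 vertex `u₀` with two successors into `{t}` and the
rest. If player 0 had finite value at `v` in both subarenas, she would have finite value at `v` in
the whole arena: she plays the winning strategy of one subarena while keeping in reserve the credit
the other one needs from `u₀`, and switches whenever player 1 leaves `u₀` towards the other
subarena. Hence player 0 has infinite value at `v` in one of the subarenas, and the memoryless
strategy that player 1 has there by induction also wins in the whole arena.
-/

open Filter

def prepend {α : Type*} (a : α) (f : ℕ → α) : ℕ → α
  | 0 => a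
  | i + 1 => f i

namespace Arena

section Plays

variable (A : Arena V)

def pathWeight (ρ : ℕ → V) (j : ℕ) : ℤ :=
  ∑ i ∈ Finset.range j, A.w (ρ i) (ρ (i + 1))

lemma pathWeight_zero (ρ : ℕ → V) : A.pathWeight ρ 0 = 0 :=
  Finset.sum_range_zero _

lemma pathWeight_succ (ρ : ℕ → V) (j : ℕ) :
    A.pathWeight ρ (j + 1) = A.pathWeight ρ j + A.w (ρ j) (ρ (j + 1)) :=
  Finset.sum_range_succ _ _

lemma pathWeight_prepend (u : V) (π : ℕ → V) (j : ℕ) :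
    A.pathWeight (prepend u π) (j + 1) = A.w u (π 0) + A.pathWeight π j := by
  rw [pathWeight, Finset.sum_range_succ', add_comm]
  rfl

def WinningFromInt (σ : V → V) (u : V) (c : ℤ) : Prop :=
  ∀ ρ, IsPlay A u ρ → Consistent0 A σ ρ → ∀ j, 0 ≤ c + A.pathWeight ρ j

def DefeatsFrom (τ : V → V) (v : V) : Prop :=
  ∀ (c : ℕ) (ρ : ℕ → V), IsPlay A v ρ → Consistent1 A τ ρ → ∃ j, energy A c ρ j < 0

lemma exists_play_consistent0 {σ : V → V} (hσ : Strategy0 A σ) (u : V) :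
    ∃ ρ, IsPlay A u ρ ∧ Consistent0 A σ ρ := by
  let next : V → V := fun x => if A.P0 x then σ x else (A.total x).choose
  have hnext : ∀ x, A.E x (next x) := fun x => by
    by_cases hx : A.P0 x
    · simpa only [next, if_pos hx] using hσ x hx
    · simpa only [next, if_neg hx] using (A.total x).choose_spec
  refine ⟨fun n => next^[n] u, ⟨rfl, fun i => ?_⟩, fun j hj => ?_⟩
  · simpa only [Function.iterate_succ_apply'] using hnext _
  · simp only [Function.iterate_succ_apply', next, if_pos hj]

def IsStrategyInvariant (σ : V → V) (S : V → ℤ → Prop) : Prop :=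
  ∀ u c, S u c → 0 ≤ c ∧ ∀ v, A.E u v → (A.P0 u → v = σ u) → S v (c + A.w u v)

def IsEnergyInvariant (S : V → ℤ → Prop) : Prop :=
  ∀ u c, S u c → 0 ≤ c ∧ (A.P0 u → ∃ v, A.E u v ∧ S v (c + A.w u v)) ∧
    (¬A.P0 u → ∀ v, A.E u v → S v (c + A.w u v))

variable {A}

lemma IsStrategyInvariant.winningFromInt {σ : V → V} {S : V → ℤ → Prop}
    (h : A.IsStrategyInvariant σ S) {u : V} {c : ℤ} (hu : S u c) : A.WinningFromInt σ u c := by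
  intro ρ hρ hcons j
  suffices S (ρ j) (c + A.pathWeight ρ j) from (h _ _ this).1
  induction j with
  | zero => simpa only [hρ.1, pathWeight_zero, add_zero] using hu
  | succ j ih =>
    rw [pathWeight_succ, ← add_assoc]
    exact (h _ _ ih).2 _ (hρ.2 j) (hcons j)

lemma isStrategyInvariant_winningFromInt {σ : V → V} (hσ : Strategy0 A σ) :
    A.IsStrategyInvariant σ (A.WinningFromInt σ) := by
  intro u c hu
  constructor
  · obtain ⟨ρ, hρ, hcons⟩ := A.exists_play_consistent0 hσ u
    simpa only [pathWeight_zero, add_zero] using hu ρ hρ hcons 0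
  · intro v he hσv ρ hρ hcons j
    have hplay : IsPlay A u (prepend u ρ) := by
      refine ⟨rfl, fun i => ?_⟩
      cases i with
      | zero => simpa only [prepend, hρ.1] using he
      | succ i => exact hρ.2 i
    have hcons' : Consistent0 A σ (prepend u ρ) := by
      intro i hi
      cases i with
      | zero => simpa only [prepend, hρ.1] using hσv hi
      | succ i => exact hcons i hi
    have := hu _ hplay hcons' (j + 1)
    rwa [pathWeight_prepend, hρ.1, ← add_assoc] at this

lemma IsStrategyInvariant.isEnergyInvariant {σ : V → V} {S : V → ℤ → Prop}
    (h : A.IsStrategyInvariant σ S) (hσ : Strategy0 A σ) : A.IsEnergyInvariant S :=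
  fun u c hu => ⟨(h u c hu).1, fun hp => ⟨σ u, hσ u hp, (h u c hu).2 _ (hσ u hp) fun _ => rfl⟩,
    fun hp v he => (h u c hu).2 v he fun hp' => absurd hp' hp⟩

end Plays

section Values

variable [Fintype V] (A : Arena V)

def succs (u : V) : Finset V :=
  Finset.univ.filter (A.E u)

lemma mem_succs {u v : V} : v ∈ A.succs u ↔ A.E u v := by
  simp [succs]

lemma succs_nonempty (u : V) : (A.succs u).Nonempty :=
  let ⟨v, hv⟩ := A.total u
  ⟨v, A.mem_succs.2 hv⟩

def minCredit : ℕ → V → ℕ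
  | 0, _ => 0
  | n + 1, u =>
    if A.P0 u then
      (A.succs u).inf' (A.succs_nonempty u) fun v => ((minCredit n v : ℤ) - A.w u v).toNat
    else
      (A.succs u).sup' (A.succs_nonempty u) fun v => ((minCredit n v : ℤ) - A.w u v).toNat

variable {A}

lemma minCredit_succ_le_iff_of_P0 {u : V} (hu : A.P0 u) {n c : ℕ} :
    A.minCredit (n + 1) u ≤ c ↔ ∃ v, A.E u v ∧ (A.minCredit n v : ℤ) ≤ c + A.w u v := by
  simp only [minCredit, if_pos hu, Finset.inf'_le_iff, mem_succs, Int.toNat_le,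
    sub_le_iff_le_add]

lemma minCredit_succ_le_iff_of_not_P0 {u : V} (hu : ¬A.P0 u) {n c : ℕ} :
    A.minCredit (n + 1) u ≤ c ↔ ∀ v, A.E u v → (A.minCredit n v : ℤ) ≤ c + A.w u v := by
  simp only [minCredit, if_neg hu, Finset.sup'_le_iff, mem_succs, Int.toNat_le,
    sub_le_iff_le_add]

variable (A)

lemma minCredit_mono (u : V) : Monotone fun n => A.minCredit n u := by
  suffices ∀ n u, A.minCredit n u ≤ A.minCredit (n + 1) u from
    monotone_nat_of_le_succ fun n => this n u
  intro n
  induction n with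
  | zero => exact fun u => Nat.zero_le _
  | succ n ih =>
    intro u
    by_cases hu : A.P0 u
    · obtain ⟨v, he, hv⟩ := (minCredit_succ_le_iff_of_P0 hu).1 le_rfl
      exact (minCredit_succ_le_iff_of_P0 hu).2 ⟨v, he, le_trans (by exact_mod_cast ih v) hv⟩
    · exact (minCredit_succ_le_iff_of_not_P0 hu).2 fun v he =>
        le_trans (by exact_mod_cast ih v) ((minCredit_succ_le_iff_of_not_P0 hu).1 le_rfl v he)

def FiniteValue (u : V) : Prop :=
  BddAbove (Set.range fun n => A.minCredit n u)

/-- The limit of `minCredit · u` when `A.FiniteValue u`; otherwise the junk value `0`. -/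
def value (u : V) : ℕ :=
  ⨆ n, A.minCredit n u

variable {A}

lemma IsEnergyInvariant.minCredit_le {S : V → ℤ → Prop} (h : A.IsEnergyInvariant S) (n : ℕ) :
    ∀ {u c}, S u c → (A.minCredit n u : ℤ) ≤ c := by
  induction n with
  | zero => exact fun hu => (h _ _ hu).1
  | succ n ih =>
    intro u c hu
    obtain ⟨hc, hP0, hP1⟩ := h u c hu
    lift c to ℕ using hc
    norm_cast
    by_cases hp : A.P0 u
    · obtain ⟨v, he, hv⟩ := hP0 hp
      exact (minCredit_succ_le_iff_of_P0 hp).2 ⟨v, he, ih hv⟩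
    · exact (minCredit_succ_le_iff_of_not_P0 hp).2 fun v he => ih (hP1 hp v he)

lemma IsEnergyInvariant.finiteValue {S : V → ℤ → Prop} (h : A.IsEnergyInvariant S) {u : V}
    {c : ℤ} (hu : S u c) : A.FiniteValue u :=
  ⟨c.toNat, by
    rintro _ ⟨n, rfl⟩
    have := h.minCredit_le n hu
    show A.minCredit n u ≤ c.toNat
    omega⟩

lemma finiteValue_of_winningFromInt {σ : V → V} (hσ : Strategy0 A σ) {u : V} {c : ℤ}
    (h : A.WinningFromInt σ u c) : A.FiniteValue u :=
  ((isStrategyInvariant_winningFromInt hσ).isEnergyInvariant hσ).finiteValue h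

variable (A)

lemma exists_minCredit_stable (K : ℕ) : ∃ N, ∀ u,
    (A.FiniteValue u → ∀ n, N ≤ n → A.minCredit n u = A.value u) ∧
    (¬A.FiniteValue u → K < A.minCredit N u) := by
  have : ∀ u, ∀ᶠ n in atTop, (A.FiniteValue u → A.minCredit n u = A.value u) ∧
      (¬A.FiniteValue u → K < A.minCredit n u) := by
    intro u
    by_cases hu : A.FiniteValue u
    · have hlim := tendsto_atTop_ciSup (A.minCredit_mono u) hu
      rw [nhds_discrete, tendsto_pure] at hlim
      exact hlim.mono fun n hn => ⟨fun _ => hn, fun h => absurd hu h⟩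
    · have hlim := tendsto_atTop_atTop_of_monotone (A.minCredit_mono u) fun b => by
        obtain ⟨_, ⟨n, rfl⟩, hn⟩ := not_bddAbove_iff.1 hu b
        exact ⟨n, hn.le⟩
      exact (hlim.eventually_gt_atTop K).mono fun n hn => ⟨fun h => absurd h hu, fun _ => hn⟩
  obtain ⟨N, hN⟩ := eventually_atTop.1 (eventually_all.2 this)
  exact ⟨N, fun u => ⟨fun hu n hn => (hN n hn u).1 hu, (hN N le_rfl u).2⟩⟩

theorem exists_strategy0_winningFrom_value :
    ∃ σ, Strategy0 A σ ∧ ∀ u, A.FiniteValue u → WinningFrom A σ u (A.value u) := by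
  set K := Finset.univ.sup A.value + Finset.univ.sup fun p : V × V => (A.w p.1 p.2).toNat
  have hK : ∀ u v, (A.value u : ℤ) + A.w u v ≤ K := fun u v => by
    have h₁ : A.value u ≤ Finset.univ.sup A.value := Finset.le_sup (Finset.mem_univ u)
    have h₂ : (A.w u v).toNat ≤ Finset.univ.sup fun p : V × V => (A.w p.1 p.2).toNat :=
      Finset.le_sup (f := fun p : V × V => (A.w p.1 p.2).toNat) (Finset.mem_univ (u, v))
    omega
  obtain ⟨N, hN⟩ := A.exists_minCredit_stable K
  have hvalue : ∀ u, A.FiniteValue u → A.minCredit (N + 1) u ≤ A.value u :=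
    fun u hu => ((hN u).1 hu (N + 1) (Nat.le_succ N)).le
  -- `K` exceeds every `value u + w u v`, so a move within the one-step bound at horizon `N`
  -- cannot reach a vertex of infinite value.
  have hmove : ∀ u v, A.FiniteValue u → (A.minCredit N v : ℤ) ≤ A.value u + A.w u v →
      A.FiniteValue v ∧ (A.value v : ℤ) ≤ A.value u + A.w u v := by
    intro u v hu hv
    have hfin : A.FiniteValue v := by
      by_contra hfin
      have := (hN v).2 hfin
      have := hK u v
      omega
    exact ⟨hfin, by rwa [← (hN v).1 hfin N le_rfl]⟩
  have hgreedy : ∀ u, ∃ v, A.E u v ∧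
      (A.P0 u → A.FiniteValue u → (A.minCredit N v : ℤ) ≤ A.value u + A.w u v) := by
    intro u
    by_cases hu : A.P0 u ∧ A.FiniteValue u
    · obtain ⟨v, he, hv⟩ := (minCredit_succ_le_iff_of_P0 hu.1).1 (hvalue u hu.2)
      exact ⟨v, he, fun _ _ => hv⟩
    · obtain ⟨v, he⟩ := A.total u
      exact ⟨v, he, fun hp hfin => absurd ⟨hp, hfin⟩ hu⟩
  choose σ hσE hσ using hgreedy
  have hS : A.IsStrategyInvariant σ fun u c => A.FiniteValue u ∧ (A.value u : ℤ) ≤ c := by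
    rintro u c ⟨hu, hc⟩
    refine ⟨(Nat.cast_nonneg _).trans hc, fun v he hcons => ?_⟩
    have hv : (A.minCredit N v : ℤ) ≤ A.value u + A.w u v := by
      by_cases hp : A.P0 u
      · rw [hcons hp]
        exact hσ u hp hu
      · exact (minCredit_succ_le_iff_of_not_P0 hp).1 (hvalue u hu) v he
    obtain ⟨hfin, hle⟩ := hmove u v hu hv
    exact ⟨hfin, by linarith⟩
  exact ⟨σ, fun u _ => hσE u, fun u hu => hS.winningFromInt ⟨hu, le_rfl⟩⟩

end Values

section Restriction

variable (A : Arena V)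

def restrict (u₀ : V) (T : Set V) (hT : ∃ v ∈ T, A.E u₀ v) : Arena V where
  E u v := A.E u v ∧ (u = u₀ → v ∈ T)
  w := A.w
  P0 := A.P0
  total u := by
    by_cases hu : u = u₀
    · obtain ⟨v, hvT, hv⟩ := hT
      subst hu
      exact ⟨v, hv, fun _ => hvT⟩
    · obtain ⟨v, hv⟩ := A.total u
      exact ⟨v, hv, fun h => absurd h hu⟩

def numPlayer1Edges [Fintype V] : ℕ :=
  (Finset.univ.filter fun p : V × V => A.E p.1 p.2 ∧ ¬A.P0 p.1).card

variable {A} {u₀ : V} {T : Set V} {hT : ∃ v ∈ T, A.E u₀ v}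

lemma numPlayer1Edges_restrict_lt [Fintype V] (hu₀ : ¬A.P0 u₀) {r : V} (hr : A.E u₀ r)
    (hrT : r ∉ T) : (A.restrict u₀ T hT).numPlayer1Edges < A.numPlayer1Edges := by
  refine Finset.card_lt_card ((Finset.ssubset_iff_of_subset fun p hp => ?_).2 ⟨(u₀, r), ?_, ?_⟩)
  · simp only [Finset.mem_filter, Finset.mem_univ, true_and] at hp ⊢
    exact ⟨hp.1.1, hp.2⟩
  · simpa using ⟨hr, hu₀⟩
  · simp only [Finset.mem_filter, Finset.mem_univ, true_and]
    exact fun h => hrT (h.1.2 rfl)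

lemma exists_defeatsFrom_of_restrict (hu₀ : ¬A.P0 u₀) {v : V}
    (h : ∃ τ, Strategy1 (A.restrict u₀ T hT) τ ∧ (A.restrict u₀ T hT).DefeatsFrom τ v) :
    ∃ τ, Strategy1 A τ ∧ A.DefeatsFrom τ v := by
  obtain ⟨τ, hτ, hwin⟩ := h
  refine ⟨τ, fun u hu => (hτ u hu).1, fun c ρ hρ hcons => hwin c ρ ⟨hρ.1, fun i => ?_⟩ hcons⟩
  refine ⟨hρ.2 i, fun hi => ?_⟩
  have hp : ¬A.P0 (ρ i) := hi ▸ hu₀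
  rw [hcons i hp]
  exact (hτ _ hp).2 hi

lemma IsEnergyInvariant.of_restrict {S : V → ℤ → Prop}
    (h : (A.restrict u₀ T hT).IsEnergyInvariant S) (hS : ∀ c, ¬S u₀ c) :
    A.IsEnergyInvariant S := by
  intro u c hu
  have hne : u ≠ u₀ := fun h => hS c (h ▸ hu)
  obtain ⟨hc, hP0, hP1⟩ := h u c hu
  refine ⟨hc, fun hp => ?_, fun hp v he => hP1 hp v ⟨he, fun h => absurd h hne⟩⟩
  obtain ⟨v, he, hv⟩ := hP0 hp
  exact ⟨v, he.1, hv⟩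

/-- The credit `b` is held in reserve for resuming the `C`-game at `u₀`. -/
def SplitWinning (B C : Arena V) (σ σ' : V → V) (u₀ u : V) (c : ℤ) : Prop :=
  ∃ a b, c = a + b ∧ B.WinningFromInt σ u a ∧ C.WinningFromInt σ' u₀ b

variable {T' : Set V} {hT' : ∃ v ∈ T', A.E u₀ v} {σ σ' : V → V}

/-- From `u₀`, player 1 either stays in the `T`-game or moves into `T'`, where player 0 switches
to `σ'` and pauses the `T`-game at `u₀`. -/
lemma SplitWinning.isEnergyInvariant_step (hu₀ : ¬A.P0 u₀)
    (hσ : Strategy0 (A.restrict u₀ T hT) σ) (hσ' : Strategy0 (A.restrict u₀ T' hT') σ')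
    (hcover : ∀ v, A.E u₀ v → v ∈ T ∨ v ∈ T') {S : V → ℤ → Prop}
    (hS : ∀ u c, SplitWinning (A.restrict u₀ T hT) (A.restrict u₀ T' hT') σ σ' u₀ u c → S u c)
    (hS' : ∀ u c, SplitWinning (A.restrict u₀ T' hT') (A.restrict u₀ T hT) σ' σ u₀ u c → S u c)
    {u : V} {c : ℤ}
    (h : SplitWinning (A.restrict u₀ T hT) (A.restrict u₀ T' hT') σ σ' u₀ u c) :
    0 ≤ c ∧ (A.P0 u → ∃ v, A.E u v ∧ S v (c + A.w u v)) ∧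
      (¬A.P0 u → ∀ v, A.E u v → S v (c + A.w u v)) := by
  obtain ⟨a, b, rfl, ha, hb⟩ := h
  have hB := isStrategyInvariant_winningFromInt hσ
  have hC := isStrategyInvariant_winningFromInt hσ'
  have ha₀ := (hB u a ha).1
  have hb₀ := (hC u₀ b hb).1
  refine ⟨by linarith, fun hp => ?_, fun hp v he => ?_⟩
  · have he := hσ u hp
    exact ⟨σ u, he.1, hS _ _ ⟨a + A.w u (σ u), b, by ring, (hB u a ha).2 _ he fun _ => rfl, hb⟩⟩
  · by_cases hvT : u = u₀ → v ∈ T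
    · exact hS _ _ ⟨a + A.w u v, b, by ring,
        (hB u a ha).2 v ⟨he, hvT⟩ fun hp' => absurd hp' hp, hb⟩
    · push Not at hvT
      obtain ⟨rfl, hvT⟩ := hvT
      have hvT' : v ∈ T' := (hcover v he).resolve_left hvT
      exact hS' _ _ ⟨b + A.w u v, a, by ring,
        (hC u b hb).2 v ⟨he, fun _ => hvT'⟩ fun hp' => absurd hp' hp, ha⟩

theorem finiteValue_of_restrict [Fintype V] (hu₀ : ¬A.P0 u₀)
    (hcover : ∀ v, A.E u₀ v → v ∈ T ∨ v ∈ T') {v : V}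
    (hB : (A.restrict u₀ T hT).FiniteValue v) (hC : (A.restrict u₀ T' hT').FiniteValue v) :
    A.FiniteValue v := by
  obtain ⟨σ, hσ, hσwin⟩ := (A.restrict u₀ T hT).exists_strategy0_winningFrom_value
  obtain ⟨σ', hσ', hσ'win⟩ := (A.restrict u₀ T' hT').exists_strategy0_winningFrom_value
  by_cases h₀ : (A.restrict u₀ T' hT').FiniteValue u₀
  · have hS : A.IsEnergyInvariant fun u c =>
        SplitWinning (A.restrict u₀ T hT) (A.restrict u₀ T' hT') σ σ' u₀ u c ∨
        SplitWinning (A.restrict u₀ T' hT') (A.restrict u₀ T hT) σ' σ u₀ u c := by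
      rintro u c (h | h)
      · exact h.isEnergyInvariant_step hu₀ hσ hσ' hcover (fun _ _ => Or.inl) fun _ _ => Or.inr
      · exact h.isEnergyInvariant_step hu₀ hσ' hσ (fun v he => (hcover v he).symm)
          (fun _ _ => Or.inr) fun _ _ => Or.inl
    exact hS.finiteValue (Or.inl ⟨_, _, rfl, hσwin v hB, hσ'win u₀ h₀⟩)
  · -- `σ'` keeps every play from `v` away from `u₀`, where it cannot be winning.
    have hS := (isStrategyInvariant_winningFromInt hσ').isEnergyInvariant hσ'
    exact (hS.of_restrict fun c hc => h₀ (finiteValue_of_winningFromInt hσ' hc)).finiteValue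
      (hσ'win v hC)

end Restriction

variable [Fintype V]

lemma finiteValue_of_play {A : Arena V}
    (huniq : ∀ u, ¬A.P0 u → ∀ x y, A.E u x → A.E u y → x = y) {v : V} {ρ : ℕ → V} {c : ℕ}
    (hρ : IsPlay A v ρ) (hnn : ∀ j, 0 ≤ energy A c ρ j) : A.FiniteValue v := by
  have hS : A.IsEnergyInvariant fun u c' => ∃ j, ρ j = u ∧ c' = c + A.pathWeight ρ j := by
    rintro _ _ ⟨j, rfl, rfl⟩
    have hnext : ∃ i, ρ i = ρ (j + 1) ∧
        c + A.pathWeight ρ j + A.w (ρ j) (ρ (j + 1)) = c + A.pathWeight ρ i :=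
      ⟨j + 1, rfl, by rw [pathWeight_succ, add_assoc]⟩
    exact ⟨hnn j, fun _ => ⟨_, hρ.2 j, hnext⟩,
      fun hp v he => huniq _ hp _ _ (hρ.2 j) he ▸ hnext⟩
  exact hS.finiteValue ⟨0, hρ.1, by rw [pathWeight_zero, add_zero]⟩

theorem exists_defeatsFrom_of_not_finiteValue (A : Arena V) (v : V) (hv : ¬A.FiniteValue v) :
    ∃ τ, Strategy1 A τ ∧ A.DefeatsFrom τ v := by
  by_cases hsplit : ∃ u₀, ¬A.P0 u₀ ∧ ∃ t r, A.E u₀ t ∧ A.E u₀ r ∧ t ≠ r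
  · obtain ⟨u₀, hu₀, t, r, ht, hr, htr⟩ := hsplit
    have hT : ∃ x ∈ ({t} : Set V), A.E u₀ x := ⟨t, rfl, ht⟩
    have hT' : ∃ x ∈ ({t}ᶜ : Set V), A.E u₀ x := ⟨r, htr.symm, hr⟩
    have hlt := A.numPlayer1Edges_restrict_lt (hT := hT) hu₀ hr htr.symm
    have hlt' := A.numPlayer1Edges_restrict_lt (hT := hT') hu₀ ht (by simp)
    by_cases hB : (A.restrict u₀ {t} hT).FiniteValue v
    · have hC : ¬(A.restrict u₀ {t}ᶜ hT').FiniteValue v := fun hC =>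
        hv (finiteValue_of_restrict hu₀ (fun x _ => em (x ∈ ({t} : Set V))) hB hC)
      exact exists_defeatsFrom_of_restrict hu₀ (exists_defeatsFrom_of_not_finiteValue _ v hC)
    · exact exists_defeatsFrom_of_restrict hu₀ (exists_defeatsFrom_of_not_finiteValue _ v hB)
  · push Not at hsplit
    refine ⟨fun u => (A.total u).choose, fun u _ => (A.total u).choose_spec, fun c ρ hρ _ => ?_⟩
    by_contra! hnn
    exact hv (finiteValue_of_play hsplit hρ hnn)
termination_by A.numPlayer1Edges

end Arena

theorem stmt1_general {V : Type} [Fintype V] (A : Arena V) (v : V) :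
    (∃ σ : V → V, Strategy0 A σ ∧ ∃ c : ℕ, WinningFrom A σ v c) ∨
    (∃ τ : V → V, Strategy1 A τ ∧ ∀ c : ℕ, ∀ ρ : ℕ → V,
      IsPlay A v ρ → Consistent1 A τ ρ → ∃ j, energy A c ρ j < 0) := by
  by_cases hv : A.FiniteValue v
  · obtain ⟨σ, hσ, hwin⟩ := A.exists_strategy0_winningFrom_value
    exact Or.inl ⟨σ, hσ, _, hwin v hv⟩
  · exact Or.inr (A.exists_defeatsFrom_of_not_finiteValue v hv)

/-- Memoryless determinacy of energy games: from every vertex, either player 0 has a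
memoryless winning strategy with some initial credit, or player 1 has a memoryless
strategy defeating every initial credit. -/
theorem stmt1 {V : Type} [Fintype V] [Nonempty V] (A : Arena V) (v : V) :
    (∃ σ : V → V, Strategy0 A σ ∧ ∃ c : ℕ, WinningFrom A σ v c) ∨
    (∃ τ : V → V, Strategy1 A τ ∧ ∀ c : ℕ, ∀ ρ : ℕ → V,
      IsPlay A v ρ → Consistent1 A τ ρ → ∃ j, energy A c ρ j < 0) :=
  stmt1_general A v
end
end

section
/- Every energy game arena Γ admits a least energy progress measure: there exists an energy progress measure f* for Γ such that f* ⊑ f for every energy progress measure f for Γ. -/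
open scoped Classical
noncomputable section

variable {V : Type}

/-
Energy progress measures are closed under pointwise infima of arbitrary families, so the infimum
of all of them is the least one. At a player-1 vertex this is monotonicity of `⊖`. At a player-0
vertex the members of the family may be witnessed by different successors, but `ℕ∞` is
well-ordered, so some successor `v'` minimises `f*(v') ⊖ w(v,v')` for the infimum `f*`, and it
witnesses the condition for `f*`.
-/

open Function

lemma osub_mono (b : ℤ) : Monotone (osub · b) :=
  ENat.monotone_map_iff.mpr fun _ _ h => Int.toNat_le_toNat (by omega)

theorem isEPM_sInf {A : Arena V} {S : Set (V → ℕ∞)} (hS : ∀ f ∈ S, IsEPM A f) :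
    IsEPM A (sInf S) := by
  have le_sInf_apply {x : ℕ∞} {v : V} (h : ∀ f ∈ S, x ≤ f v) : x ≤ sInf S v := by
    rw [sInf_apply]
    exact le_iInf fun f => h f f.2
  have sInf_le_apply {f : V → ℕ∞} (hf : f ∈ S) (v : V) : sInf S v ≤ f v := sInf_le hf v
  refine ⟨fun v hv => ?_, fun v hv v' hvv' => ?_⟩
  · let cost (v' : V) : ℕ∞ := osub (sInf S v') (A.w v v')
    obtain ⟨v₀, hv₀⟩ := A.total v
    let best := argminOn cost {v' | A.E v v'} ⟨v₀, hv₀⟩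
    refine ⟨best, argminOn_mem cost _ _, le_sInf_apply fun f hf => ?_⟩
    obtain ⟨v', hvv', hf_v⟩ := (hS f hf).1 v hv
    calc cost best ≤ cost v' := argminOn_le cost {v' | A.E v v'} hvv'
      _ ≤ osub (f v') (A.w v v') := osub_mono _ (sInf_le_apply hf v')
      _ ≤ f v := hf_v
  · refine le_sInf_apply fun f hf => ?_
    calc osub (sInf S v') (A.w v v')
        ≤ osub (f v') (A.w v v') := osub_mono _ (sInf_le_apply hf v')
      _ ≤ f v := (hS f hf).2 v hv v' hvv'

theorem stmt5_general {V : Type} (A : Arena V) :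
    ∃ fstar : V → ℕ∞, IsEPM A fstar ∧ ∀ f : V → ℕ∞, IsEPM A f → ∀ v, fstar v ≤ f v :=
  ⟨sInf {f | IsEPM A f}, isEPM_sInf fun _ hf => hf,
    fun _ hf => sInf_le (s := {f | IsEPM A f}) hf⟩

/-- Every energy game arena admits a least energy progress measure. -/
theorem stmt5 {V : Type} [Fintype V] [Nonempty V] (A : Arena V) :
    ∃ fstar : V → ℕ∞, IsEPM A fstar ∧ ∀ f : V → ℕ∞, IsEPM A f → ∀ v, fstar v ≤ f v :=
  stmt5_general A
end
end

section
/- Let f* be the least energy progress measure of an energy game arena Γ. Then for every vertex v ∈ W₁ (i.e., every vertex from which player 0 has no winning memoryless strategy), f*(v) = ⊤. -/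
open scoped Classical
noncomputable section

variable {V : Type}

/-! If `f` is an energy progress measure, let player 0 move along an edge witnessing the EPM
condition. Along every play consistent with this strategy, each edge taken raises the energy
level by at least the increase of `f`, so with initial credit `f v` the energy level stays above
the current value of `f`, which is finite and nonnegative. Hence any EPM that is finite at `v`
certifies `v ∈ W₀`; in particular so does the least one. -/

@[simp] lemma osub_top (b : ℤ) : osub ⊤ b = ⊤ := rfl

@[simp] lemma osub_natCast (a : ℕ) (b : ℤ) : osub a b = ((a : ℤ) - b).toNat := rfl

lemma osub_le_coe_iff {a : ℕ∞} {b : ℤ} {m : ℕ} :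
    osub a b ≤ m ↔ ∃ k : ℕ, a = k ∧ (k : ℤ) - b ≤ m := by
  induction a using ENat.recTopCoe with
  | top => simp
  | coe k => simp [Int.toNat_le]

lemma energy_succ (A : Arena V) (c : ℕ) (ρ : ℕ → V) (j : ℕ) :
    energy A c ρ (j + 1) = energy A c ρ j + A.w (ρ j) (ρ (j + 1)) := by
  simp only [energy, Finset.sum_range_succ, add_assoc]

lemma exists_le_energy_of_osub_le {A : Arena V} {f : V → ℕ∞} {ρ : ℕ → V} {n : ℕ}
    (h0 : f (ρ 0) = n)
    (hstep : ∀ j, osub (f (ρ (j + 1))) (A.w (ρ j) (ρ (j + 1))) ≤ f (ρ j)) :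
    ∀ j, ∃ m : ℕ, f (ρ j) = m ∧ (m : ℤ) ≤ energy A n ρ j
  | 0 => ⟨n, h0, by simp [energy]⟩
  | j + 1 => by
    obtain ⟨m, hm, hle⟩ := exists_le_energy_of_osub_le h0 hstep j
    have hj := hstep j
    rw [hm, osub_le_coe_iff] at hj
    obtain ⟨k, hk, hkm⟩ := hj
    exact ⟨k, hk, by rw [energy_succ]; linarith⟩

def IsEPM.strategy {A : Arena V} {f : V → ℕ∞} (hf : IsEPM A f) (u : V) : V :=
  if h : A.P0 u then (hf.1 u h).choose else (A.total u).choose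

lemma IsEPM.strategy0 {A : Arena V} {f : V → ℕ∞} (hf : IsEPM A f) :
    Strategy0 A hf.strategy := fun u hu => by
  simpa only [IsEPM.strategy, dif_pos hu] using (hf.1 u hu).choose_spec.1

lemma IsEPM.osub_le_of_consistent {A : Arena V} {f : V → ℕ∞} (hf : IsEPM A f)
    {v : V} {ρ : ℕ → V} (hρ : IsPlay A v ρ) (hcons : Consistent0 A hf.strategy ρ) (j : ℕ) :
    osub (f (ρ (j + 1))) (A.w (ρ j) (ρ (j + 1))) ≤ f (ρ j) := by
  by_cases hp : A.P0 (ρ j)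
  · rw [hcons j hp]
    simpa only [IsEPM.strategy, dif_pos hp] using (hf.1 (ρ j) hp).choose_spec.2
  · exact hf.2 (ρ j) hp _ (hρ.2 j)

lemma IsEPM.winningFrom {A : Arena V} {f : V → ℕ∞} (hf : IsEPM A f) {v : V} {n : ℕ}
    (hv : f v = n) : WinningFrom A hf.strategy v n := by
  intro ρ hρ hcons j
  obtain ⟨m, -, hm⟩ :=
    exists_le_energy_of_osub_le (hρ.1 ▸ hv) (hf.osub_le_of_consistent hρ hcons) j
  exact (Int.natCast_nonneg m).trans hm

lemma IsEPM.mem_W0_of_ne_top {A : Arena V} {f : V → ℕ∞} (hf : IsEPM A f) {v : V}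
    (hv : f v ≠ ⊤) : v ∈ W0 A := by
  lift f v to ℕ using hv with n hn
  exact ⟨hf.strategy, hf.strategy0, n, hf.winningFrom hn.symm⟩

theorem stmt6_general {V : Type} (A : Arena V)
    (fstar : V → ℕ∞) (hEPM : IsEPM A fstar) :
    ∀ v : V, v ∉ W0 A → fstar v = ⊤ :=
  fun _ hv => by_contra fun hne => hv (hEPM.mem_W0_of_ne_top hne)

/-- The least energy progress measure is `⊤` on every vertex outside player 0's
winning region `W₀`. -/
theorem stmt6 {V : Type} [Fintype V] [Nonempty V] (A : Arena V)
    (fstar : V → ℕ∞) (hEPM : IsEPM A fstar)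
    (hleast : ∀ f : V → ℕ∞, IsEPM A f → ∀ v, fstar v ≤ f v) :
    ∀ v : V, v ∉ W0 A → fstar v = ⊤ :=
  stmt6_general A fstar hEPM
end
end

section
/- Let f* be the least energy progress measure of an energy game arena Γ and let v ∈ V with f*(v) = n ∈ ℕ (so f*(v) ≠ ⊤). Then n is the minimum initial credit for v: some memoryless player-0 strategy is winning from v with credit n, and no player-0 memoryless strategy is winning from v with any credit c < n. -/
open scoped Classical
noncomputable section

variable {V : Type}

/-!
A finite value of an EPM is an energy invariant: if player 0 always moves along an edge
witnessing the EPM condition, then along every consistent play the energy level stays at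
least the value of `f*` at the current vertex, hence nonnegative. Conversely, for any fixed
strategy `σ`, the least credit with which `σ` wins from each vertex (`⊤` if there is none)
is itself an EPM, so by leastness `f*` lies below it.
-/

lemma osub_coe (m : ℕ) (b : ℤ) : osub (m : ℕ∞) b = (((m : ℤ) - b).toNat : ℕ∞) := rfl

lemma osub_mono_s10 {a a' : ℕ∞} (b : ℤ) (h : a ≤ a') : osub a b ≤ osub a' b := by
  cases a' with
  | top => exact le_top
  | coe m' =>
    cases a with
    | top => simp at h
    | coe m =>
      rw [osub_coe, osub_coe, Nat.cast_le]
      exact Int.toNat_le_toNat (by have := ENat.natCast_le_natCast.mp h; omega)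

lemma exists_eq_coe_of_osub_le_coe {a : ℕ∞} {b : ℤ} {m : ℕ} (h : osub a b ≤ m) :
    ∃ k : ℕ, a = k ∧ (k : ℤ) - b ≤ m := by
  cases a with
  | top => exact absurd h (not_le.mpr (ENat.natCast_lt_top m))
  | coe k =>
    rw [osub_coe, Nat.cast_le] at h
    exact ⟨k, rfl, Int.toNat_le.mp h⟩

namespace IsEPM

variable {A : Arena V} {f : V → ℕ∞}

def strategy_s10 (hf : IsEPM A f) (u : V) : V :=
  if h : A.P0 u then Classical.choose (hf.1 u h) else u

lemma strategy_spec (hf : IsEPM A f) {u : V} (hu : A.P0 u) :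
    A.E u (hf.strategy_s10 u) ∧ osub (f (hf.strategy_s10 u)) (A.w u (hf.strategy_s10 u)) ≤ f u := by
  simpa only [strategy_s10, dif_pos hu] using Classical.choose_spec (hf.1 u hu)

lemma strategy0_s10 (hf : IsEPM A f) : Strategy0 A hf.strategy_s10 :=
  fun _ hu => (hf.strategy_spec hu).1

lemma osub_le_of_consistent_s10 (hf : IsEPM A f) {ρ : ℕ → V} (hplay : ∀ i, A.E (ρ i) (ρ (i + 1)))
    (hcons : Consistent0 A hf.strategy_s10 ρ) (j : ℕ) :
    osub (f (ρ (j + 1))) (A.w (ρ j) (ρ (j + 1))) ≤ f (ρ j) := by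
  by_cases h : A.P0 (ρ j)
  · rw [hcons j h]
    exact (hf.strategy_spec h).2
  · exact hf.2 _ h _ (hplay j)

lemma exists_coe_le_energy (hf : IsEPM A f) {v : V} {n : ℕ} (hfv : f v = n) {ρ : ℕ → V}
    (hplay : IsPlay A v ρ) (hcons : Consistent0 A hf.strategy_s10 ρ) (j : ℕ) :
    ∃ m : ℕ, f (ρ j) = m ∧ (m : ℤ) ≤ energy A n ρ j := by
  induction j with
  | zero => exact ⟨n, hplay.1 ▸ hfv, by simp [energy]⟩
  | succ j ih =>
    obtain ⟨m, hm, hle⟩ := ih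
    have hstep := hf.osub_le_of_consistent_s10 hplay.2 hcons j
    rw [hm] at hstep
    obtain ⟨k, hk, hkm⟩ := exists_eq_coe_of_osub_le_coe hstep
    exact ⟨k, hk, by rw [energy_succ]; linarith⟩

lemma winningFrom_s10 (hf : IsEPM A f) {v : V} {n : ℕ} (hfv : f v = n) :
    WinningFrom A hf.strategy_s10 v n := by
  intro ρ hplay hcons j
  obtain ⟨m, -, hm⟩ := hf.exists_coe_le_energy hfv hplay hcons j
  exact le_trans (Int.natCast_nonneg m) hm

end IsEPM

def consPath (u : V) (ρ : ℕ → V) : ℕ → V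
  | 0 => u
  | k + 1 => ρ k

section Optimality

variable {A : Arena V} {σ : V → V}

lemma isPlay_consPath {u u' : V} {ρ : ℕ → V} (he : A.E u u') (hρ : IsPlay A u' ρ) :
    IsPlay A u (consPath u ρ) := by
  refine ⟨rfl, fun i => ?_⟩
  cases i with
  | zero => exact (hρ.1 ▸ he :)
  | succ k => exact hρ.2 k

lemma consistent0_consPath {u : V} {ρ : ℕ → V} (hc : A.P0 u → ρ 0 = σ u)
    (hρ : Consistent0 A σ ρ) : Consistent0 A σ (consPath u ρ) := by
  intro k hk
  cases k with
  | zero => exact hc hk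
  | succ k => exact hρ k hk

lemma energy_consPath (c : ℕ) (u : V) (ρ : ℕ → V) (j : ℕ) :
    energy A c (consPath u ρ) (j + 1) = energy A c ρ j + A.w u (ρ 0) := by
  simp only [energy, Finset.sum_range_succ', consPath]
  ring

lemma exists_play_consistent0 (hσ : Strategy0 A σ) (u : V) :
    ∃ ρ : ℕ → V, IsPlay A u ρ ∧ Consistent0 A σ ρ := by
  let next : V → V := fun x => if A.P0 x then σ x else Classical.choose (A.total x)
  refine ⟨fun j => next^[j] u, ⟨rfl, fun i => ?_⟩, fun j hj => ?_⟩
  · change A.E (next^[i] u) (next^[i + 1] u)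
    rw [Function.iterate_succ_apply']
    by_cases h : A.P0 (next^[i] u)
    · simpa only [next, if_pos h] using hσ _ h
    · simpa only [next, if_neg h] using Classical.choose_spec (A.total (next^[i] u))
  · change next^[j + 1] u = σ (next^[j] u)
    rw [Function.iterate_succ_apply']
    exact if_pos hj

namespace WinningFrom

variable {u u' : V} {c : ℕ}

lemma energy_add_weight_nonneg (hw : WinningFrom A σ u c) (he : A.E u u')
    (hc : A.P0 u → u' = σ u) {ρ : ℕ → V} (hρ : IsPlay A u' ρ) (hcons : Consistent0 A σ ρ)
    (j : ℕ) : 0 ≤ energy A c ρ j + A.w u u' := by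
  have h := hw _ (isPlay_consPath he hρ) (consistent0_consPath (hρ.1 ▸ hc) hcons) (j + 1)
  rwa [energy_consPath, hρ.1] at h

lemma credit_add_weight_nonneg (hw : WinningFrom A σ u c) (hσ : Strategy0 A σ)
    (he : A.E u u') (hc : A.P0 u → u' = σ u) : 0 ≤ (c : ℤ) + A.w u u' := by
  obtain ⟨ρ, hρ, hcons⟩ := exists_play_consistent0 hσ u'
  simpa [energy] using hw.energy_add_weight_nonneg he hc hρ hcons 0

lemma succ (hw : WinningFrom A σ u c) (hσ : Strategy0 A σ) (he : A.E u u')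
    (hc : A.P0 u → u' = σ u) : WinningFrom A σ u' ((c : ℤ) + A.w u u').toNat := by
  intro ρ hρ hcons j
  have h := hw.energy_add_weight_nonneg he hc hρ hcons j
  rw [energy, Int.toNat_of_nonneg (hw.credit_add_weight_nonneg hσ he hc)]
  rw [energy] at h
  linarith

end WinningFrom

def minCredit (A : Arena V) (σ : V → V) (u : V) : ℕ∞ :=
  if h : ∃ c, WinningFrom A σ u c then (Nat.find h : ℕ∞) else ⊤

lemma minCredit_le {u : V} {c : ℕ} (hw : WinningFrom A σ u c) : minCredit A σ u ≤ c := by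
  rw [minCredit, dif_pos ⟨c, hw⟩, Nat.cast_le]
  exact Nat.find_min' _ hw

lemma winningFrom_of_minCredit_eq {u : V} {m : ℕ} (h : minCredit A σ u = m) :
    WinningFrom A σ u m := by
  by_cases hex : ∃ c, WinningFrom A σ u c
  · rw [minCredit, dif_pos hex, Nat.cast_inj] at h
    exact h ▸ Nat.find_spec hex
  · rw [minCredit, dif_neg hex] at h
    exact absurd h (ENat.top_ne_natCast m)

lemma osub_minCredit_le (hσ : Strategy0 A σ) {u u' : V} (he : A.E u u')
    (hc : A.P0 u → u' = σ u) : osub (minCredit A σ u') (A.w u u') ≤ minCredit A σ u := by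
  cases hm : minCredit A σ u with
  | top => exact le_top
  | coe m =>
    have hw := winningFrom_of_minCredit_eq hm
    calc osub (minCredit A σ u') (A.w u u')
        ≤ osub (((m : ℤ) + A.w u u').toNat : ℕ) (A.w u u') :=
          osub_mono_s10 _ (minCredit_le (hw.succ hσ he hc))
      _ = m := by
          rw [osub_coe, Int.toNat_of_nonneg (hw.credit_add_weight_nonneg hσ he hc)]
          simp

lemma isEPM_minCredit (hσ : Strategy0 A σ) : IsEPM A (minCredit A σ) :=
  ⟨fun u hu => ⟨σ u, hσ u hu, osub_minCredit_le hσ (hσ u hu) fun _ => rfl⟩,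
    fun _ hu _ he => osub_minCredit_le hσ he fun h => absurd h hu⟩

end Optimality

theorem stmt10_general {V : Type} (A : Arena V)
    (fstar : V → ℕ∞) (hEPM : IsEPM A fstar)
    (hleast : ∀ f : V → ℕ∞, IsEPM A f → ∀ v, fstar v ≤ f v)
    (v : V) (n : ℕ) (hfv : fstar v = (n : ℕ∞)) :
    (∃ σ : V → V, Strategy0 A σ ∧ WinningFrom A σ v n) ∧
    (∀ c : ℕ, c < n → ∀ σ : V → V, Strategy0 A σ → ¬ WinningFrom A σ v c) := by
  refine ⟨⟨hEPM.strategy_s10, hEPM.strategy0_s10, hEPM.winningFrom_s10 hfv⟩, fun c hc σ hσ hw => ?_⟩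
  have hnc : (n : ℕ∞) ≤ c := hfv ▸ (hleast _ (isEPM_minCredit hσ) v).trans (minCredit_le hw)
  exact absurd (Nat.cast_le.mp hnc) (not_le.mpr hc)

/-- If the least EPM has finite value `n` at `v`, then `n` is the minimum initial credit
for `v`: some memoryless player-0 strategy is winning from `v` with credit `n`, and no
memoryless player-0 strategy is winning from `v` with any credit `c < n`. -/
theorem stmt10 {V : Type} [Fintype V] [Nonempty V] (A : Arena V)
    (fstar : V → ℕ∞) (hEPM : IsEPM A fstar)
    (hleast : ∀ f : V → ℕ∞, IsEPM A f → ∀ v, fstar v ≤ f v)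
    (v : V) (n : ℕ) (hfv : fstar v = (n : ℕ∞)) :
    (∃ σ : V → V, Strategy0 A σ ∧ WinningFrom A σ v n) ∧
    (∀ c : ℕ, c < n → ∀ σ : V → V, Strategy0 A σ → ¬ WinningFrom A σ v c) :=
  stmt10_general A fstar hEPM hleast v n hfv
end
end

section
/- Let Γ be an energy game arena with least energy progress measure f*. If a function f : V → N is reachable from the constant-0 function by a finite sequence of lifts at violating vertices (f_{j+1} = δ(f_j, v_j) with f_j violating the EPM local condition at v_j) and f itself violates the EPM local condition at no vertex (i.e., f is an energy progress measure), then f = f*. Hence any maximal lifting sequence starting from 0 that terminates computes the least energy progress measure. -/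
/-! Since `⊖` is monotone, a lift of a function lying below an energy progress measure `g`
still lies below `g`; so every lifting sequence from `0` stays below `f*`. A terminal
function violates nothing, hence is itself an energy progress measure and lies above `f*`. -/

open scoped Classical
noncomputable section

variable {V : Type}

lemma osub_monotone (b : ℤ) : Monotone (fun a : ℕ∞ => osub a b) :=
  ENat.monotone_map_iff.2 fun _ _ h => Int.toNat_le_toNat (by simpa using h)

lemma isEPM_of_forall_not_violates {A : Arena V} {f : V → ℕ∞}
    (h : ∀ u, ¬ Violates A f u) : IsEPM A f := by
  refine ⟨fun v hv => ?_, fun v hv v' he => ?_⟩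
  · simpa [Violates, hv] using h v
  · simpa [Violates, hv] using fun hlt => h v (.inr ⟨hv, v', he, hlt⟩)

lemma liftVal_le_of_le_isEPM {A : Arena V} {f g : V → ℕ∞} (hfg : f ≤ g) (hg : IsEPM A g)
    (v : V) : liftVal A f v ≤ g v := by
  unfold liftVal
  split_ifs with hv
  · obtain ⟨v', he, hv'⟩ := hg.1 v hv
    calc sInf {x | ∃ v', A.E v v' ∧ x = osub (f v') (A.w v v')}
        ≤ osub (f v') (A.w v v') := sInf_le ⟨v', he, rfl⟩
      _ ≤ osub (g v') (A.w v v') := osub_monotone _ (hfg v')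
      _ ≤ g v := hv'
  · refine sSup_le ?_
    rintro _ ⟨v', he, rfl⟩
    exact (osub_monotone _ (hfg v')).trans (hg.2 v hv v' he)

lemma liftOp_le_of_le_isEPM {A : Arena V} {f g : V → ℕ∞} (hfg : f ≤ g) (hg : IsEPM A g)
    (v : V) : liftOp A f v ≤ g := by
  intro u
  unfold liftOp
  split_ifs with hu
  · exact hu ▸ liftVal_le_of_le_isEPM hfg hg v
  · exact hfg u

lemma liftSeq_le_of_isEPM {A : Arena V} {g : V → ℕ∞} (hg : IsEPM A g) {k : ℕ}
    {F : ℕ → V → ℕ∞} {vs : ℕ → V} (h0 : F 0 = 0)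
    (hstep : ∀ j < k, F (j + 1) = liftOp A (F j) (vs j)) : ∀ j ≤ k, F j ≤ g
  | 0, _ => h0 ▸ bot_le
  | j + 1, hj => by
    rw [hstep j hj]
    exact liftOp_le_of_le_isEPM (liftSeq_le_of_isEPM hg h0 hstep j (by omega)) hg (vs j)

theorem stmt12_general {V : Type} (A : Arena V)
    (fstar : V → ℕ∞) (hEPM : IsEPM A fstar)
    (hleast : ∀ f : V → ℕ∞, IsEPM A f → ∀ v, fstar v ≤ f v)
    (k : ℕ) (F : ℕ → V → ℕ∞) (vs : ℕ → V)
    (h0 : F 0 = fun _ => 0)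
    (hstep : ∀ j < k, Violates A (F j) (vs j) ∧ F (j + 1) = liftOp A (F j) (vs j))
    (hterm : ∀ u, ¬ Violates A (F k) u) :
    F k = fstar :=
  le_antisymm (liftSeq_le_of_isEPM hEPM h0 (fun j hj => (hstep j hj).2) k le_rfl)
    (hleast _ (isEPM_of_forall_not_violates hterm))

/-- If a function reachable from the constant-0 function by lifts at violating vertices
violates the EPM local condition at no vertex, then it equals the least EPM: any
terminating maximal lifting sequence from 0 computes the least energy progress measure. -/
theorem stmt12 {V : Type} [Fintype V] [Nonempty V] (A : Arena V)
    (fstar : V → ℕ∞) (hEPM : IsEPM A fstar)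
    (hleast : ∀ f : V → ℕ∞, IsEPM A f → ∀ v, fstar v ≤ f v)
    (k : ℕ) (F : ℕ → V → ℕ∞) (vs : ℕ → V)
    (h0 : F 0 = fun _ => 0)
    (hstep : ∀ j < k, Violates A (F j) (vs j) ∧ F (j + 1) = liftOp A (F j) (vs j))
    (hterm : ∀ u, ¬ Violates A (F k) u) :
    F k = fstar :=
  stmt12_general A fstar hEPM hleast k F vs h0 hstep hterm
end
end

section
/- Let Γ = (V,E,w,⟨V₀,V₁⟩) be an energy game arena and v ∈ V. Then v ∈ W₀ (player 0 wins the energy game from v for some initial credit) if and only if player 0 has a memoryless strategy σ₀ such that every play π = v₀v₁v₂… from v consistent with σ₀ satisfies liminf_{n→∞} (1/n)·Σ_{i=0}^{n−1} w(v_i,v_{i+1}) ≥ 0; i.e., the energy decision problem coincides with the threshold-0 mean-payoff condition. -/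
open scoped Classical
noncomputable section

variable {V : Type}

/-!
If player 0 wins the energy game with credit `c`, all prefix sums of consistent plays are at
least `-c`, so their averages have nonnegative `liminf`.

Conversely, suppose every consistent play has nonnegative `liminf` average. Then every cycle
`ρ a = ρ (a + p)` on a consistent play has nonnegative weight: repeating it forever gives a
consistent play whose averages along `a + m p` tend to the cycle's mean weight. Splitting a prefix
at the last visit to its first vertex, again and again, decomposes it into such cycles plus at
most `|V|` single edges, so the same strategy wins with credit `|V| · max |w|`.
-/

open Filter Topology Finset

def pumpIndex (a p n : ℕ) : ℕ :=
  if n < a then n else a + (n - a) % p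

lemma pumpIndex_zero (a p : ℕ) : pumpIndex a p 0 = 0 := by
  unfold pumpIndex; split_ifs <;> simp; omega

lemma pumpIndex_of_lt {a p n : ℕ} (h : n < a) : pumpIndex a p n = n := if_pos h

lemma pumpIndex_add_mul_add {a p i : ℕ} (m : ℕ) (hi : i < p) :
    pumpIndex a p (a + m * p + i) = a + i := by
  rw [pumpIndex, if_neg (by omega), show a + m * p + i - a = i + p * m by ring_nf; omega,
    Nat.add_mul_mod_self_left, Nat.mod_eq_of_lt hi]

lemma pumpIndex_succ {ρ : ℕ → V} {a p : ℕ} (hp : 0 < p) (hcyc : ρ a = ρ (a + p)) (n : ℕ) :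
    ρ (pumpIndex a p (n + 1)) = ρ (pumpIndex a p n + 1) := by
  rcases lt_or_ge n a with hn | hn
  · rcases (Nat.succ_le_of_lt hn).lt_or_eq with hn' | hn'
    · rw [pumpIndex_of_lt hn', pumpIndex_of_lt hn]
    · obtain rfl : n + 1 = a := hn'
      simp [pumpIndex]
  obtain ⟨k, rfl⟩ := Nat.exists_eq_add_of_le hn
  obtain ⟨m, i, hi, rfl⟩ : ∃ m i, i < p ∧ k = m * p + i :=
    ⟨k / p, k % p, Nat.mod_lt _ hp, by rw [mul_comm]; exact (Nat.div_add_mod k p).symm⟩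
  rw [show a + (m * p + i) = a + m * p + i by ring, pumpIndex_add_mul_add m hi]
  rcases (Nat.succ_le_of_lt hi).lt_or_eq with hi' | hi'
  · rw [show a + m * p + i + 1 = a + m * p + (i + 1) by ring, pumpIndex_add_mul_add m hi']
    rfl
  · have hwrap : a + m * p + i + 1 = a + (m + 1) * p + 0 := by
      rw [← hi', Nat.succ_eq_add_one]; ring
    rw [hwrap, pumpIndex_add_mul_add (m + 1) hp, add_zero, hcyc, ← hi', add_assoc]

namespace Arena

variable (A : Arena V)

def weightSum (ρ : ℕ → V) (n : ℕ) : ℤ :=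
  ∑ i ∈ range n, A.w (ρ i) (ρ (i + 1))

def meanWeight (ρ : ℕ → V) (n : ℕ) : ℝ :=
  (∑ i ∈ range n, A.w (ρ i) (ρ (i + 1)) : ℝ) / n

lemma meanWeight_eq (ρ : ℕ → V) (n : ℕ) : A.meanWeight ρ n = (A.weightSum ρ n : ℝ) / n := by
  simp [meanWeight, weightSum]

lemma energy_eq (c : ℕ) (ρ : ℕ → V) (j : ℕ) : energy A c ρ j = c + A.weightSum ρ j := rfl

lemma weightSum_add_one (ρ : ℕ → V) (n : ℕ) :
    A.weightSum ρ (n + 1) = A.weightSum ρ n + A.w (ρ n) (ρ (n + 1)) :=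
  sum_range_succ _ _

lemma weightSum_add (ρ : ℕ → V) (m n : ℕ) :
    A.weightSum ρ (m + n) =
      A.weightSum ρ m + ∑ i ∈ range n, A.w (ρ (m + i)) (ρ (m + i + 1)) :=
  sum_range_add _ _ _

lemma exists_abs_w_le [Finite V] : ∃ B : ℕ, ∀ a b, |A.w a b| ≤ B := by
  obtain ⟨M, hM⟩ := (Set.finite_range fun e : V × V => |A.w e.1 e.2|).bddAbove
  exact ⟨M.toNat, fun a b => (hM ⟨(a, b), rfl⟩).trans (Int.self_le_toNat M)⟩

lemma exists_abs_meanWeight_le [Finite V] : ∃ B : ℝ, ∀ ρ n, |A.meanWeight ρ n| ≤ B := by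
  obtain ⟨B, hB⟩ := A.exists_abs_w_le
  refine ⟨B, fun ρ n => ?_⟩
  rcases Nat.eq_zero_or_pos n with rfl | hn
  · simp [meanWeight]
  have hsum : |(A.weightSum ρ n : ℝ)| ≤ n * B := by
    rw [weightSum, Int.cast_sum]
    calc |∑ i ∈ range n, (A.w (ρ i) (ρ (i + 1)) : ℝ)|
        ≤ ∑ i ∈ range n, |(A.w (ρ i) (ρ (i + 1)) : ℝ)| := abs_sum_le_sum_abs _ _
      _ ≤ ∑ _i ∈ range n, (B : ℝ) := sum_le_sum fun i _ => by exact_mod_cast hB _ _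
      _ = n * B := by simp
  rw [meanWeight_eq, abs_div, Nat.abs_cast, div_le_iff₀ (by positivity)]
  linarith

lemma isBoundedUnder_ge_meanWeight [Finite V] (ρ : ℕ → V) :
    IsBoundedUnder (· ≥ ·) atTop (A.meanWeight ρ) := by
  obtain ⟨B, hB⟩ := A.exists_abs_meanWeight_le
  exact isBoundedUnder_of ⟨-B, fun n => neg_le_of_abs_le (hB ρ n)⟩

lemma isBoundedUnder_le_meanWeight [Finite V] (ρ : ℕ → V) :
    IsBoundedUnder (· ≤ ·) atTop (A.meanWeight ρ) := by
  obtain ⟨B, hB⟩ := A.exists_abs_meanWeight_le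
  exact isBoundedUnder_of ⟨B, fun n => le_of_abs_le (hB ρ n)⟩

lemma liminf_meanWeight_nonneg [Finite V] (ρ : ℕ → V) (c : ℤ)
    (hc : ∀ n, -c ≤ A.weightSum ρ n) : 0 ≤ liminf (A.meanWeight ρ) atTop := by
  have hlim : Tendsto (fun n : ℕ => (-c : ℝ) / n) atTop (𝓝 0) :=
    tendsto_const_div_atTop_nhds_zero_nat _
  calc (0 : ℝ) = liminf (fun n : ℕ => (-c : ℝ) / n) atTop := hlim.liminf_eq.symm
    _ ≤ liminf (A.meanWeight ρ) atTop := by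
      refine liminf_le_liminf (Eventually.of_forall fun n => ?_) hlim.isBoundedUnder_ge
        (A.isBoundedUnder_le_meanWeight ρ).isCoboundedUnder_ge
      rw [meanWeight_eq]
      gcongr
      exact_mod_cast hc n

lemma isPlay_comp {v : V} {ρ : ℕ → V} {ι : ℕ → ℕ} (hρ : IsPlay A v ρ) (h0 : ι 0 = 0)
    (hsucc : ∀ n, ρ (ι (n + 1)) = ρ (ι n + 1)) : IsPlay A v (ρ ∘ ι) :=
  ⟨by simpa [h0] using hρ.1, fun n => by simpa [hsucc n] using hρ.2 (ι n)⟩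

lemma consistent0_comp {σ : V → V} {ρ : ℕ → V} {ι : ℕ → ℕ} (hρ : Consistent0 A σ ρ)
    (hsucc : ∀ n, ρ (ι (n + 1)) = ρ (ι n + 1)) : Consistent0 A σ (ρ ∘ ι) :=
  fun n h => by simpa [hsucc n] using hρ (ι n) h

lemma weightSum_comp {ρ : ℕ → V} {ι : ℕ → ℕ} (hsucc : ∀ n, ρ (ι (n + 1)) = ρ (ι n + 1))
    (n : ℕ) : A.weightSum (ρ ∘ ι) n = ∑ i ∈ range n, A.w (ρ (ι i)) (ρ (ι i + 1)) := by
  simp [weightSum, hsucc]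

lemma weightSum_pump {ρ : ℕ → V} {a p : ℕ} (hp : 0 < p) (hcyc : ρ a = ρ (a + p)) (m : ℕ) :
    A.weightSum (ρ ∘ pumpIndex a p) (a + m * p) =
      A.weightSum ρ a + m * (A.weightSum ρ (a + p) - A.weightSum ρ a) := by
  induction m with
  | zero =>
    rw [weightSum_comp A (pumpIndex_succ hp hcyc)]
    simp only [Nat.cast_zero, zero_mul, add_zero]
    exact sum_congr rfl fun i hi => by rw [pumpIndex_of_lt (mem_range.mp hi)]
  | succ m ih =>
    have hloop : ∑ i ∈ range p, A.w ((ρ ∘ pumpIndex a p) (a + m * p + i))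
        ((ρ ∘ pumpIndex a p) (a + m * p + i + 1)) =
          A.weightSum ρ (a + p) - A.weightSum ρ a := by
      rw [A.weightSum_add ρ a p, add_sub_cancel_left]
      refine sum_congr rfl fun i hi => ?_
      rw [Function.comp_apply, Function.comp_apply, pumpIndex_succ hp hcyc,
        pumpIndex_add_mul_add m (mem_range.mp hi)]
    rw [show a + (m + 1) * p = a + m * p + p by ring, weightSum_add, ih, hloop]
    push_cast
    ring

lemma tendsto_meanWeight_pump {ρ : ℕ → V} {a p : ℕ} (hp : 0 < p) (hcyc : ρ a = ρ (a + p)) :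
    Tendsto (fun m : ℕ => A.meanWeight (ρ ∘ pumpIndex a p) (a + m * p)) atTop
      (𝓝 ((A.weightSum ρ (a + p) - A.weightSum ρ a : ℝ) / p)) := by
  refine (tendsto_add_mul_div_add_mul_atTop_nhds (A.weightSum ρ a : ℝ) a
    (A.weightSum ρ (a + p) - A.weightSum ρ a : ℝ) (Nat.cast_ne_zero.mpr hp.ne')).congr
    fun m => ?_
  rw [meanWeight_eq, weightSum_pump A hp hcyc]
  push_cast
  ring

lemma weightSum_le_weightSum_add [Finite V] {σ : V → V} {v : V}
    (hmean : ∀ π, IsPlay A v π → Consistent0 A σ π → 0 ≤ liminf (A.meanWeight π) atTop)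
    {ρ : ℕ → V} (hρ : IsPlay A v ρ) (hσ : Consistent0 A σ ρ) {a p : ℕ}
    (hcyc : ρ a = ρ (a + p)) : A.weightSum ρ a ≤ A.weightSum ρ (a + p) := by
  rcases Nat.eq_zero_or_pos p with rfl | hp
  · rfl
  by_contra! hneg
  set π := ρ ∘ pumpIndex a p
  have hlim := A.tendsto_meanWeight_pump hp hcyc
  have hφ : Tendsto (fun m : ℕ => a + m * p) atTop atTop :=
    tendsto_atTop_mono (fun m => (Nat.le_mul_of_pos_right m hp).trans (Nat.le_add_left _ _))
      tendsto_id
  have hle : liminf (A.meanWeight π) atTop ≤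
      liminf (A.meanWeight π ∘ fun m => a + m * p) atTop :=
    hφ.liminf_le_liminf_comp hlim.isCoboundedUnder_ge (A.isBoundedUnder_ge_meanWeight π)
  have hneg' : (A.weightSum ρ (a + p) - A.weightSum ρ a : ℝ) / p < 0 :=
    div_neg_of_neg_of_pos (by exact_mod_cast sub_neg.mpr hneg) (by exact_mod_cast hp)
  have := hmean π (A.isPlay_comp hρ (pumpIndex_zero a p) (pumpIndex_succ hp hcyc))
    (A.consistent0_comp hσ (pumpIndex_succ hp hcyc))
  rw [Function.comp_def, hlim.liminf_eq] at hle
  linarith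

lemma neg_mul_card_le_weightSum_sub [DecidableEq V] {ρ : ℕ → V} {B : ℕ}
    (hB : ∀ i, -(B : ℤ) ≤ A.w (ρ i) (ρ (i + 1)))
    (hcyc : ∀ a p, ρ a = ρ (a + p) → A.weightSum ρ a ≤ A.weightSum ρ (a + p))
    {t j : ℕ} (htj : t ≤ j) :
    -(B * #((Ico t j).image ρ) : ℤ) ≤ A.weightSum ρ j - A.weightSum ρ t := by
  induction hn : j - t using Nat.strong_induction_on generalizing t with
  | _ n ih =>
  -- `l` is the last visit to `ρ t` before `j`: the part from `t` to `l` is a cycle, and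
  -- `ρ t` is never seen again.
  set P : ℕ → Prop := fun k => t ≤ k ∧ ρ k = ρ t
  set l := Nat.findGreatest P j
  obtain ⟨htl, hρl⟩ : t ≤ l ∧ ρ l = ρ t := Nat.findGreatest_spec (P := P) htj ⟨le_rfl, rfl⟩
  have hcyc_tl : A.weightSum ρ t ≤ A.weightSum ρ l := by
    simpa [Nat.add_sub_cancel' htl] using hcyc t (l - t) (by rw [Nat.add_sub_cancel' htl, hρl])
  rcases (Nat.findGreatest_le j : l ≤ j).lt_or_eq with hlj | hlj
  swap
  · rw [show l = j from hlj] at hcyc_tl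
    linarith [show (0 : ℤ) ≤ B * #((Ico t j).image ρ) by positivity]
  have hrest := ih (j - (l + 1)) (by omega) hlj rfl
  have hsub : (Ico (l + 1) j).image ρ ⊆ ((Ico t j).image ρ).erase (ρ t) := by
    intro x hx
    obtain ⟨k, hk, rfl⟩ := mem_image.mp hx
    rw [mem_Ico] at hk
    refine mem_erase.mpr ⟨fun hkt => ?_, mem_image_of_mem ρ (mem_Ico.mpr ⟨by omega, hk.2⟩)⟩
    exact Nat.findGreatest_is_greatest (by omega : l < k) hk.2.le ⟨by omega, hkt⟩
  have hcard : #((Ico (l + 1) j).image ρ) + 1 ≤ #((Ico t j).image ρ) := by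
    have := card_le_card hsub
    rw [card_erase_of_mem (mem_image_of_mem ρ (mem_Ico.mpr ⟨le_rfl, by omega⟩))] at this
    have : 0 < #((Ico t j).image ρ) :=
      card_pos.mpr ⟨ρ t, mem_image_of_mem ρ (mem_Ico.mpr ⟨le_rfl, by omega⟩)⟩
    omega
  have hcardB : (B * #((Ico (l + 1) j).image ρ) + B : ℤ) ≤ B * #((Ico t j).image ρ) := by
    rw [← mul_add_one]; exact_mod_cast Nat.mul_le_mul_left B hcard
  linarith [A.weightSum_add_one ρ l, hB l]

lemma neg_mul_card_le_weightSum [Fintype V] {ρ : ℕ → V} {B : ℕ}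
    (hB : ∀ i, -(B : ℤ) ≤ A.w (ρ i) (ρ (i + 1)))
    (hcyc : ∀ a p, ρ a = ρ (a + p) → A.weightSum ρ a ≤ A.weightSum ρ (a + p)) (j : ℕ) :
    -(Fintype.card V * B : ℤ) ≤ A.weightSum ρ j := by
  classical
  have h := A.neg_mul_card_le_weightSum_sub hB hcyc (Nat.zero_le j)
  have hcard : (#((Ico 0 j).image ρ) : ℤ) ≤ Fintype.card V := by exact_mod_cast card_le_univ _
  rw [show A.weightSum ρ 0 = 0 from sum_range_zero _, sub_zero] at h
  nlinarith

end Arena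

theorem stmt17_general {V : Type} [Fintype V] (A : Arena V) (v : V) :
    v ∈ W0 A ↔
      ∃ σ : V → V, Strategy0 A σ ∧ ∀ ρ : ℕ → V, IsPlay A v ρ → Consistent0 A σ ρ →
        0 ≤ Filter.liminf
          (fun n : ℕ => ((∑ i ∈ Finset.range n, A.w (ρ i) (ρ (i + 1))) : ℝ) / n)
          Filter.atTop := by
  constructor
  · rintro ⟨σ, hσ, c, hwin⟩
    refine ⟨σ, hσ, fun ρ hρ hc => A.liminf_meanWeight_nonneg ρ c fun n => ?_⟩
    linarith [A.energy_eq c ρ n ▸ hwin ρ hρ hc n]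
  · rintro ⟨σ, hσ, hmean⟩
    obtain ⟨B, hB⟩ := A.exists_abs_w_le
    refine ⟨σ, hσ, Fintype.card V * B, fun ρ hρ hc j => ?_⟩
    have := A.neg_mul_card_le_weightSum (ρ := ρ) (fun i => neg_le_of_abs_le (hB _ _))
      (fun _ _ => A.weightSum_le_weightSum_add hmean hρ hc) j
    rw [Arena.energy_eq]
    push_cast
    linarith

/-- `v ∈ W₀` in the energy game iff player 0 has a memoryless strategy forcing all
consistent plays from `v` to have `liminf` average weight `≥ 0`: the energy decision
problem coincides with the threshold-0 mean-payoff condition. -/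
theorem stmt17 {V : Type} [Fintype V] [Nonempty V] (A : Arena V) (v : V) :
    v ∈ W0 A ↔
      ∃ σ : V → V, Strategy0 A σ ∧ ∀ ρ : ℕ → V, IsPlay A v ρ → Consistent0 A σ ρ →
        0 ≤ Filter.liminf
          (fun n : ℕ => ((∑ i ∈ Finset.range n, A.w (ρ i) (ρ (i + 1))) : ℝ) / n)
          Filter.atTop :=
  stmt17_general A v
end
end
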